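/- arXiv:2502.18078 — 3 statements merged into one kernel-verified Lean document; each statement's English description precedes it below -/
import Mathlib

section
/- Let Π : ℝ^m → Mat_{d×d}(ℝ) be differentiable at x with Π(y)² = Π(y) for all y near x, set R := 2Π − I and ω_Π(v) := Π(x)·DΠ − DΠ·Π(x) (DΠ the directional derivative of Π at x in direction v). Then R is parallel for the connection d + ω_Π: for every v ∈ ℝ^m, DR + ω_Π(v)·R(x) − R(x)·ω_Π(v) = 0, where DR is the directional derivative of R at x in direction v. -/
/-!
Differentiating `Π² = Π` shows that `Π' := DΠ(v)` satisfies `ΠΠ' + Π'Π = Π'`, hence `ΠΠ'Π = 0`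
and `⁅⁅Π, Π'⁆, Π⁆ = -Π'`. Since `DR(v) = 2Π'` and `ω(v) = ⁅Π, Π'⁆`, the covariant derivative
`DR(v) + ⁅ω(v), R⁆ = 2Π' + 2⁅⁅Π, Π'⁆, Π⁆` vanishes.
-/

attribute [local instance] Matrix.normedAddCommGroup Matrix.normedSpace

open Topology

theorem ContinuousLinearMap.fderiv_apply_of_eventually_idempotent {𝕜 E F : Type*}
    [NontriviallyNormedField 𝕜] [NormedAddCommGroup E] [NormedSpace 𝕜 E]
    [NormedAddCommGroup F] [NormedSpace 𝕜 F] (B : F →L[𝕜] F →L[𝕜] F) {f : E → F} {x : E}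
    (hf : DifferentiableAt 𝕜 f x) (hidem : (fun y => B (f y) (f y)) =ᶠ[𝓝 x] f) (v : E) :
    B (f x) (fderiv 𝕜 f x v) + B (fderiv 𝕜 f x v) (f x) = fderiv 𝕜 f x v := by
  have h := congrArg (· v) ((B.fderiv_of_bilinear hf hf).symm.trans hidem.fderiv_eq)
  simpa using h

section TangentToIdempotent

variable {A : Type*} [Ring A] {p q : A}

theorem IsIdempotentElem.mul_mul_self_eq_zero (hp : IsIdempotentElem p)
    (hq : p * q + q * p = q) : p * q * p = 0 := by
  have h : p * q + p * q * p = p * q := by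
    simpa only [mul_add, ← mul_assoc, hp.eq] using congrArg (p * ·) hq
  simpa using h

theorem IsIdempotentElem.lie_lie_self (hp : IsIdempotentElem p) (hq : p * q + q * p = q) :
    ⁅⁅p, q⁆, p⁆ = -q := by
  have hpqp := hp.mul_mul_self_eq_zero hq
  calc ⁅⁅p, q⁆, p⁆ = p * q * p + p * q * p - (p * p * q + q * (p * p)) := by
        simp only [Ring.lie_def]; noncomm_ring
    _ = -q := by rw [hp.eq, hpqp, hq]; abel

theorem IsIdempotentElem.lie_lie_two_mul_sub_one (hp : IsIdempotentElem p)
    (hq : p * q + q * p = q) : ⁅⁅p, q⁆, 2 * p - 1⁆ = -(2 * q) := by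
  calc ⁅⁅p, q⁆, 2 * p - 1⁆ = 2 * ⁅⁅p, q⁆, p⁆ := by simp only [Ring.lie_def]; noncomm_ring
    _ = -(2 * q) := by rw [hp.lie_lie_self hq, mul_neg]

end TangentToIdempotent

/-- For a projection-valued map `Proj` differentiable at `x`,
with `R := 2Π − I` and connection form `ω_Π(v) = Π(x)·DΠ − DΠ·Π(x)`, the map
`R` is parallel for the connection `d + ω_Π`: for every `v`,
`DR + ω_Π(v)·R(x) − R(x)·ω_Π(v) = 0`. -/
theorem involution_parallel_for_connection {m d : ℕ}
    (Proj : EuclideanSpace ℝ (Fin m) → Matrix (Fin d) (Fin d) ℝ)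
    (x : EuclideanSpace ℝ (Fin m))
    (hdiff : DifferentiableAt ℝ Proj x)
    (hidem : ∀ᶠ y in nhds x, Proj y * Proj y = Proj y)
    (R : EuclideanSpace ℝ (Fin m) → Matrix (Fin d) (Fin d) ℝ)
    (hR : ∀ y, R y = (2 : ℝ) • Proj y - 1)
    (ω : EuclideanSpace ℝ (Fin m) → Matrix (Fin d) (Fin d) ℝ)
    (hω : ∀ v, ω v = Proj x * fderiv ℝ Proj x v - fderiv ℝ Proj x v * Proj x) :
    ∀ v : EuclideanSpace ℝ (Fin m),
      fderiv ℝ R x v + ω v * R x - R x * ω v = 0 := by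
  intro v
  have hp : IsIdempotentElem (Proj x) := hidem.self_of_nhds
  have hq : Proj x * fderiv ℝ Proj x v + fderiv ℝ Proj x v * Proj x = fderiv ℝ Proj x v :=
    ContinuousLinearMap.fderiv_apply_of_eventually_idempotent
      (LinearMap.mul ℝ (Matrix (Fin d) (Fin d) ℝ)).toContinuousBilinearMap hdiff hidem v
  have hR' : HasFDerivAt R ((2 : ℝ) • fderiv ℝ Proj x) x :=
    ((hdiff.hasFDerivAt.const_smul (2 : ℝ)).sub_const 1).congr_of_eventuallyEq (.of_forall hR)
  rw [hR'.fderiv, hω, hR, smul_apply, two_smul, two_smul, ← two_mul,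
    ← two_mul, add_sub_assoc, ← Ring.lie_def, ← Ring.lie_def, hp.lie_lie_two_mul_sub_one hq,
    add_neg_cancel]
end

section
/- Let R : U → Mat_{d×d}(ℝ) be twice continuously differentiable on an open set U ⊆ ℝ^m with R(y)·R(y) = I for all y ∈ U. For 1 ≤ i ≤ m define A_i(y) := R(y)·∂_i R(y). Then the connection d + A is flat: for all 1 ≤ i, j ≤ m and all y ∈ U, ∂_i A_j(y) − ∂_j A_i(y) + A_i(y)·A_j(y) − A_j(y)·A_i(y) = 0. In particular, for an idempotent-valued C² map Π and R = 2Π − I, the connection d + 2ω_Π with ω_Π := Π dΠ − dΠ Π is flat. -/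
attribute [local instance] Matrix.normedAddCommGroup Matrix.normedSpace

/-- The curvature `∂_i A_j − ∂_j A_i + [A_i, A_j]` at `y` of a matrix-valued
connection 1-form `A = (A_1, …, A_m)` on `ℝ^m`; a connection `d + A` is flat
when this vanishes identically. -/
noncomputable def connectionCurvature {m d : ℕ}
    (A : Fin m → EuclideanSpace ℝ (Fin m) → Matrix (Fin d) (Fin d) ℝ)
    (i j : Fin m) (y : EuclideanSpace ℝ (Fin m)) : Matrix (Fin d) (Fin d) ℝ :=
  fderiv ℝ (A j) y (EuclideanSpace.single i 1)
    - fderiv ℝ (A i) y (EuclideanSpace.single j 1)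
    + (A i y * A j y - A j y * A i y)

/-!
Differentiating `R * R = 1` shows that every `∂ᵢR` anticommutes with `R`, hence
`Aᵢ Aⱼ = R ∂ᵢR R ∂ⱼR = -∂ᵢR ∂ⱼR`. By the product rule and the symmetry of second derivatives,
`∂ᵢAⱼ - ∂ⱼAᵢ = ∂ᵢR ∂ⱼR - ∂ⱼR ∂ᵢR`, which cancels `[Aᵢ, Aⱼ]`.

For an idempotent `P`, differentiating `P * P = P` gives `P dP + dP P = dP`; then `R = 2P - 1`
is an involution with `R dR = 2 (P dP - dP P)`, so the second claim is the first one for this `R`.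
-/

open Filter Topology

section Algebra

variable {α : Type*} [Ring α]

theorem mul_mul_mul_eq_neg_of_anticomm {r a : α} (hr : r * r = 1) (ha : r * a + a * r = 0)
    (b : α) : r * a * (r * b) = -(a * b) := by
  have : a * r = -(r * a) := eq_neg_of_add_eq_zero_right ha
  calc r * a * (r * b) = r * (a * r) * b := by noncomm_ring
    _ = -(a * b) := by rw [this, mul_neg, ← mul_assoc, hr]; noncomm_ring

variable {𝕜 : Type*} [CommRing 𝕜] [Algebra 𝕜 α]

theorem IsIdempotentElem.two_smul_sub_one_mul_self {p : α} (hp : IsIdempotentElem p) :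
    ((2 : 𝕜) • p - 1) * ((2 : 𝕜) • p - 1) = 1 := by
  simp only [sub_mul, mul_sub, hp.eq, smul_mul_assoc, mul_smul_comm, one_mul, mul_one]
  module

theorem two_smul_sub_one_mul_two_smul {p q : α} (hpq : p * q + q * p = q) :
    ((2 : 𝕜) • p - 1) * ((2 : 𝕜) • q) = (2 : 𝕜) • (p * q - q * p) := by
  have : q * p = q - p * q := eq_sub_of_add_eq' hpq
  simp only [sub_mul, smul_mul_assoc, mul_smul_comm, one_mul, this]
  module

end Algebra

section Calculus

variable {𝕜 : Type*} [RCLike 𝕜] {n : Type*} [Fintype n]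
  {E : Type*} [NormedAddCommGroup E] [NormedSpace 𝕜 E]

variable (𝕜 n) in
noncomputable def Matrix.mulCLM : Matrix n n 𝕜 →L[𝕜] Matrix n n 𝕜 →L[𝕜] Matrix n n 𝕜 :=
  LinearMap.toContinuousLinearMap <|
    (LinearMap.toContinuousLinearMap : (Matrix n n 𝕜 →ₗ[𝕜] Matrix n n 𝕜) ≃ₗ[𝕜] _).toLinearMap
      ∘ₗ LinearMap.mul 𝕜 (Matrix n n 𝕜)

/- Under the sup-norm instance, the matrix topology and module structure seen by generic calculus
lemmas agree with Mathlib's direct matrix instances only up to unfolding, so those lemmas do not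
rewrite matrix-valued goals: derivatives are computed through statements with written-out types,
which are checked up to defeq. -/
theorem fderiv_matrix_mul_apply {f g : E → Matrix n n 𝕜} {x : E}
    (hf : DifferentiableAt 𝕜 f x) (hg : DifferentiableAt 𝕜 g x) (v : E) :
    fderiv 𝕜 (fun z => f z * g z) x v = f x * fderiv 𝕜 g x v + fderiv 𝕜 f x v * g x := by
  have h : HasFDerivAt (fun z => f z * g z)
      ((Matrix.mulCLM 𝕜 n).precompR E (f x) (fderiv 𝕜 g x)
        + (Matrix.mulCLM 𝕜 n).precompL E (fderiv 𝕜 f x) (g x)) x :=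
    (Matrix.mulCLM 𝕜 n).hasFDerivAt_of_bilinear hf.hasFDerivAt hg.hasFDerivAt
  exact DFunLike.congr_fun h.fderiv v

theorem fderiv_mul_self_apply_of_eventuallyEq {f g : E → Matrix n n 𝕜} {x : E}
    (hf : DifferentiableAt 𝕜 f x) (h : (fun z => f z * f z) =ᶠ[𝓝 x] g) (v : E) :
    f x * fderiv 𝕜 f x v + fderiv 𝕜 f x v * f x = fderiv 𝕜 g x v := by
  rw [← fderiv_matrix_mul_apply hf hf, h.fderiv_eq]

theorem fderiv_fderiv_apply_const {f : E → Matrix n n 𝕜} {x : E}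
    (hf' : DifferentiableAt 𝕜 (fderiv 𝕜 f) x) (u v : E) :
    fderiv 𝕜 (fun z => fderiv 𝕜 f z u) x v = fderiv 𝕜 (fderiv 𝕜 f) x v u := by
  refine (DFunLike.congr_fun (hf'.hasFDerivAt.clm_apply (hasFDerivAt_const u x)).fderiv v).trans ?_
  show fderiv 𝕜 f x 0 + fderiv 𝕜 (fderiv 𝕜 f) x v u = _
  rw [map_zero, zero_add]

theorem fderiv_mul_fderiv_apply {f : E → Matrix n n 𝕜} {x : E} (hf : DifferentiableAt 𝕜 f x)
    (hf' : DifferentiableAt 𝕜 (fderiv 𝕜 f) x) (u v : E) :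
    fderiv 𝕜 (fun z => f z * fderiv 𝕜 f z u) x v
      = fderiv 𝕜 f x v * fderiv 𝕜 f x u + f x * fderiv 𝕜 (fderiv 𝕜 f) x v u := by
  have hfu : DifferentiableAt 𝕜 (fun z => fderiv 𝕜 f z u) x :=
    hf'.clm_apply (differentiableAt_const u)
  rw [fderiv_matrix_mul_apply hf hfu, fderiv_fderiv_apply_const hf', add_comm]

theorem curvature_mul_fderiv_eq_zero_of_mul_self_eq_one [DecidableEq n]
    {R : E → Matrix n n 𝕜} {y : E}
    (hR : ContDiffAt 𝕜 2 R y) (hsq : (fun z => R z * R z) =ᶠ[𝓝 y] fun _ => 1) (v w : E) :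
    fderiv 𝕜 (fun z => R z * fderiv 𝕜 R z w) y v - fderiv 𝕜 (fun z => R z * fderiv 𝕜 R z v) y w
      + (R y * fderiv 𝕜 R y v * (R y * fderiv 𝕜 R y w)
        - R y * fderiv 𝕜 R y w * (R y * fderiv 𝕜 R y v)) = 0 := by
  have hR₁ : DifferentiableAt 𝕜 R y := hR.differentiableAt (by norm_num)
  have hR₂ : DifferentiableAt 𝕜 (fderiv 𝕜 R) y :=
    (hR.fderiv_right (m := 1) (by norm_num)).differentiableAt (by norm_num)
  have hanti (u : E) : R y * fderiv 𝕜 R y u + fderiv 𝕜 R y u * R y = 0 := by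
    simpa using fderiv_mul_self_apply_of_eventuallyEq hR₁ hsq u
  have hsymm : fderiv 𝕜 (fderiv 𝕜 R) y v w = fderiv 𝕜 (fderiv 𝕜 R) y w v :=
    hR.isSymmSndFDerivAt (by simp) v w
  rw [fderiv_mul_fderiv_apply hR₁ hR₂, fderiv_mul_fderiv_apply hR₁ hR₂,
    mul_mul_mul_eq_neg_of_anticomm hsq.self_of_nhds (hanti v),
    mul_mul_mul_eq_neg_of_anticomm hsq.self_of_nhds (hanti w), hsymm]
  abel

theorem two_smul_commutator_fderiv_eventuallyEq [DecidableEq n] {P : E → Matrix n n 𝕜} {y : E}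
    (hP : ∀ᶠ z in 𝓝 y, DifferentiableAt 𝕜 P z) (hidem : (fun z => P z * P z) =ᶠ[𝓝 y] P)
    (u : E) :
    (fun z => (2 : 𝕜) • (P z * fderiv 𝕜 P z u - fderiv 𝕜 P z u * P z))
      =ᶠ[𝓝 y] fun z => ((2 : 𝕜) • P z - 1) * fderiv 𝕜 (fun z => (2 : 𝕜) • P z - 1) z u := by
  filter_upwards [hP, hidem.eventuallyEq_nhds] with z hPz hidem_z
  have hdR : fderiv 𝕜 (fun z => (2 : 𝕜) • P z - 1) z = (2 : 𝕜) • fderiv 𝕜 P z :=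
    ((hPz.hasFDerivAt.const_smul (2 : 𝕜)).sub_const 1).fderiv
  rw [hdR, FunLike.coe_smul, Pi.smul_apply,
    two_smul_sub_one_mul_two_smul (fderiv_mul_self_apply_of_eventuallyEq hPz hidem_z u)]

end Calculus

theorem connectionCurvature_congr {m d : ℕ}
    {A B : Fin m → EuclideanSpace ℝ (Fin m) → Matrix (Fin d) (Fin d) ℝ}
    {y : EuclideanSpace ℝ (Fin m)} (h : ∀ k, A k =ᶠ[𝓝 y] B k) (i j : Fin m) :
    connectionCurvature A i j y = connectionCurvature B i j y := by
  simp only [connectionCurvature, (h i).fderiv_eq, (h j).fderiv_eq, (h i).self_of_nhds,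
    (h j).self_of_nhds]

/-- If `R` is `C²` on an open set `U ⊆ ℝ^m` with `R·R = I` on
`U`, then the connection `d + A` with `A_i(y) = R(y)·∂_i R(y)` is flat on `U`.
In particular, for a `C²` idempotent-valued map `P` and `R = 2P − I`, the
connection `d + 2ω_P` with `ω_P = P dP − dP P` is flat on `U`. -/
theorem flatness_of_R_dR {m d : ℕ}
    (U : Set (EuclideanSpace ℝ (Fin m))) (hU : IsOpen U)
    (R : EuclideanSpace ℝ (Fin m) → Matrix (Fin d) (Fin d) ℝ)
    (hR : ContDiffOn ℝ 2 R U)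
    (hinv : ∀ y ∈ U, R y * R y = 1) :
    (∀ i j : Fin m, ∀ y ∈ U,
        connectionCurvature
          (fun i z => R z * fderiv ℝ R z (EuclideanSpace.single i 1)) i j y = 0) ∧
    (∀ P : EuclideanSpace ℝ (Fin m) → Matrix (Fin d) (Fin d) ℝ,
        ContDiffOn ℝ 2 P U → (∀ y ∈ U, P y * P y = P y) →
        ∀ i j : Fin m, ∀ y ∈ U,
          connectionCurvature
            (fun i z => (2 : ℝ) •
              (P z * fderiv ℝ P z (EuclideanSpace.single i 1)
                - fderiv ℝ P z (EuclideanSpace.single i 1) * P z)) i j y = 0) := by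
  refine ⟨fun i j y hy => ?_, fun P hP hidem i j y hy => ?_⟩
  · exact curvature_mul_fderiv_eq_zero_of_mul_self_eq_one (hR.contDiffAt (hU.mem_nhds hy))
      (eventually_of_mem (hU.mem_nhds hy) hinv) _ _
  · have hUy : U ∈ 𝓝 y := hU.mem_nhds hy
    have hPdiff : ∀ᶠ z in 𝓝 y, DifferentiableAt ℝ P z :=
      eventually_of_mem hUy fun z hz =>
        (hP.differentiableOn (by norm_num) z hz).differentiableAt (hU.mem_nhds hz)
    have hRinv : (fun z => ((2 : ℝ) • P z - 1) * ((2 : ℝ) • P z - 1)) =ᶠ[𝓝 y] fun _ => 1 :=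
      eventually_of_mem hUy fun z hz => IsIdempotentElem.two_smul_sub_one_mul_self (hidem z hz)
    rw [connectionCurvature_congr fun k => two_smul_commutator_fderiv_eventuallyEq hPdiff
      (eventually_of_mem hUy hidem) (EuclideanSpace.single k 1)]
    exact curvature_mul_fderiv_eq_zero_of_mul_self_eq_one
      (((hP.contDiffAt hUy).const_smul (2 : ℝ)).sub contDiffAt_const) hRinv _ _
end

section
/- Let u : ℝ³ \ {0} → ℝ³ be defined by u(x) = x/‖x‖. Then u is differentiable at every x ≠ 0, and for every r > 0 the squared L² norm of its differential over the ball of radius r centred at the origin satisfies ∫_{B_r(0)} Σ_{i=1}^{3} ‖(fderiv u x)(e_i)‖² dx = 8π·r, where (e_i) is the standard orthonormal basis of ℝ³. In particular r^{−1}·‖du‖²_{L²(B_r(0))} = 8π for all r > 0. -/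
/-!
Away from the origin the differential of `u = x / ‖x‖` is `‖x‖⁻¹` times the orthogonal
projection onto `x⊥`, so in dimension `n` its squared Hilbert–Schmidt norm is `(n - 1) / ‖x‖²`,
i.e. `2 / ‖x‖²` in `ℝ³`. In polar coordinates
`∫_{B_r} ‖x‖⁻² dx = 3 vol(B_1) ∫₀ʳ ρ² ρ⁻² dρ = 4π r`.
-/

open scoped Real RealInnerProductSpace
open Filter MeasureTheory Metric Set Topology

section Derivative

variable {E : Type*} [NormedAddCommGroup E] [InnerProductSpace ℝ E] {x : E}

theorem hasFDerivAt_norm_of_ne_zero (hx : x ≠ 0) :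
    HasFDerivAt (‖·‖) (‖x‖⁻¹ • innerSL ℝ x) x := by
  have hsqrt := (hasStrictFDerivAt_norm_sq x).hasFDerivAt.sqrt
    (pow_ne_zero 2 (norm_ne_zero_iff.mpr hx))
  simp only [Real.sqrt_sq (norm_nonneg _)] at hsqrt
  convert hsqrt using 1
  ext v
  simp only [smul_apply, coe_innerSL_apply, smul_eq_mul, one_div, mul_inv_rev, nsmul_eq_mul,
    Nat.cast_ofNat]
  ring

theorem hasFDerivAt_inv_norm_smul (hx : x ≠ 0) :
    HasFDerivAt (fun y : E => ‖y‖⁻¹ • y)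
      (‖x‖⁻¹ • ContinuousLinearMap.id ℝ E - (‖x‖ ^ 3)⁻¹ • (innerSL ℝ x).smulRight x) x := by
  have hinv := (hasDerivAt_inv (norm_ne_zero_iff.mpr hx)).comp_hasFDerivAt x
    (hasFDerivAt_norm_of_ne_zero hx)
  refine (hinv.smul (hasFDerivAt_id x)).congr_fderiv ?_
  ext v
  simp only [Function.comp_apply, neg_smul, id_eq, add_apply, smul_apply,
    ContinuousLinearMap.id_apply, ContinuousLinearMap.smulRight_apply, neg_apply,
    coe_innerSL_apply, smul_eq_mul, sub_apply]
  module

theorem norm_sq_fderiv_inv_norm_smul_apply (hx : x ≠ 0) (v : E) :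
    ‖fderiv ℝ (fun y : E => ‖y‖⁻¹ • y) x v‖ ^ 2 = (‖v‖ ^ 2 - ⟪x, v⟫ ^ 2 / ‖x‖ ^ 2) / ‖x‖ ^ 2 := by
  have hx0 : ‖x‖ ≠ 0 := norm_ne_zero_iff.mpr hx
  rw [(hasFDerivAt_inv_norm_smul hx).fderiv]
  simp only [sub_apply, smul_apply, ContinuousLinearMap.id_apply,
    ContinuousLinearMap.smulRight_apply, innerSL_apply_apply, smul_smul]
  rw [norm_sub_sq_real]
  simp only [norm_smul, mul_pow, Real.norm_eq_abs, sq_abs, real_inner_smul_left,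
    real_inner_smul_right, real_inner_comm v x]
  field_simp
  ring

theorem sum_norm_sq_fderiv_inv_norm_smul {ι : Type*} [Fintype ι] (b : OrthonormalBasis ι ℝ E)
    (hx : x ≠ 0) :
    ∑ i, ‖fderiv ℝ (fun y : E => ‖y‖⁻¹ • y) x (b i)‖ ^ 2 = (Fintype.card ι - 1) / ‖x‖ ^ 2 := by
  have hx0 : ‖x‖ ≠ 0 := norm_ne_zero_iff.mpr hx
  simp only [norm_sq_fderiv_inv_norm_smul_apply hx, b.orthonormal.1, ← Finset.sum_div,
    Finset.sum_sub_distrib, b.sum_sq_inner_left]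
  simp only [one_pow, Finset.sum_const, Finset.card_univ, nsmul_eq_mul, mul_one]
  field_simp

end Derivative

section Integral

variable {F : Type*} [NormedAddCommGroup F] [NormedSpace ℝ F]
  {E : Type*} [NormedAddCommGroup E] [NormedSpace ℝ E] [FiniteDimensional ℝ E]
  [MeasurableSpace E] [BorelSpace E] (μ : Measure E) [μ.IsAddHaarMeasure]

theorem setIntegral_ball_fun_norm_addHaar [Nontrivial E] (f : ℝ → F) (r : ℝ) :
    ∫ x in ball (0 : E) r, f ‖x‖ ∂μ =
      Module.finrank ℝ E • μ.real (ball 0 1) •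
        ∫ y in Ioo (0 : ℝ) r, y ^ (Module.finrank ℝ E - 1) • f y := by
  have hball : (ball (0 : E) r).indicator (fun x => f ‖x‖) = fun x => (Iio r).indicator f ‖x‖ := by
    ext x
    by_cases hx : ‖x‖ < r <;> simp [indicator, hx]
  rw [← integral_indicator measurableSet_ball, hball, integral_fun_norm_addHaar μ,
    ← Ioi_inter_Iio, ← setIntegral_indicator measurableSet_Iio]
  simp_rw [indicator_smul]

theorem setIntegral_ball_inv_norm_sq (hE : 3 ≤ Module.finrank ℝ E) {r : ℝ} (hr : 0 ≤ r) :
    ∫ x in ball (0 : E) r, (‖x‖ ^ 2)⁻¹ ∂μ =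
      Module.finrank ℝ E * μ.real (ball 0 1) * r ^ (Module.finrank ℝ E - 2) /
        (Module.finrank ℝ E - 2) := by
  have : Nontrivial E := Module.nontrivial_of_finrank_pos (R := ℝ) (by omega)
  obtain ⟨n, hn⟩ : ∃ n, Module.finrank ℝ E = n + 3 := ⟨_, (Nat.sub_add_cancel hE).symm⟩
  have hradial : ∫ y in Ioo (0 : ℝ) r, y ^ (n + 3 - 1) • (y ^ 2)⁻¹ = r ^ (n + 1) / (n + 1) := by
    rw [setIntegral_congr_fun (g := fun y => y ^ n) measurableSet_Ioo fun y hy => ?_,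
      ← integral_Ioc_eq_integral_Ioo, ← intervalIntegral.integral_of_le hr, integral_pow]
    · simp
    · rw [smul_eq_mul, Nat.add_sub_assoc (by norm_num), pow_add,
        mul_inv_cancel_right₀ (pow_ne_zero 2 hy.1.ne')]
  rw [setIntegral_ball_fun_norm_addHaar μ (fun y => (y ^ 2)⁻¹), hn, hradial]
  push_cast
  ring

end Integral

/-- The map `u(x) = x/‖x‖` from `ℝ³ \ {0}` to `ℝ³` is
differentiable at every `x ≠ 0` and satisfies
`∫_{B_r(0)} |du|² dx = 8π·r` for every `r > 0`, where
`|du|² = Σᵢ ‖(fderiv u x)(eᵢ)‖²` is the squared Hilbert–Schmidt norm of its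
differential; in particular `r⁻¹·‖du‖²_{L²(B_r(0))} = 8π` for all `r > 0`. -/
theorem hedgehog_energy
    (u : EuclideanSpace ℝ (Fin 3) → EuclideanSpace ℝ (Fin 3))
    (hu : ∀ x : EuclideanSpace ℝ (Fin 3), x ≠ 0 → u x = ‖x‖⁻¹ • x) :
    (∀ x : EuclideanSpace ℝ (Fin 3), x ≠ 0 → DifferentiableAt ℝ u x) ∧
    (∀ r : ℝ, 0 < r →
      ∫ x in Metric.ball (0 : EuclideanSpace ℝ (Fin 3)) r,
        ∑ i : Fin 3, ‖fderiv ℝ u x (EuclideanSpace.single i 1)‖ ^ 2 =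
      8 * π * r) := by
  have hu_nhds : ∀ x, x ≠ 0 → u =ᶠ[𝓝 x] fun y => ‖y‖⁻¹ • y := fun x hx =>
    (eventually_ne_nhds hx).mono hu
  refine ⟨fun x hx => (hu_nhds x hx).differentiableAt_iff.mpr
    (hasFDerivAt_inv_norm_smul hx).differentiableAt, fun r hr => ?_⟩
  have hdensity : ∀ᵐ x ∂volume, x ∈ ball 0 r →
      ∑ i : Fin 3, ‖fderiv ℝ u x (EuclideanSpace.single i 1)‖ ^ 2 = 2 * (‖x‖ ^ 2)⁻¹ := by
    filter_upwards [compl_mem_ae_iff.mpr (measure_singleton 0)] with x (hx : x ≠ 0) _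
    simp only [← EuclideanSpace.basisFun_apply, (hu_nhds x hx).fderiv_eq,
      sum_norm_sq_fderiv_inv_norm_smul _ hx]
    norm_num [div_eq_mul_inv]
  rw [setIntegral_congr_ae measurableSet_ball hdensity, integral_const_mul,
    setIntegral_ball_inv_norm_sq volume (by simp) hr.le]
  have hball : volume.real (ball (0 : EuclideanSpace ℝ (Fin 3)) 1) = 4 / 3 * π := by
    rw [measureReal_def, EuclideanSpace.volume_ball_fin_three, ENNReal.toReal_mul,
      ENNReal.toReal_ofReal (by positivity)]
    norm_num
    ring
  rw [hball, finrank_euclideanSpace_fin]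
  norm_num
  ring
end
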